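/- For x ≥ 2, Σ_{d ≤ x} 1/φ(d) ≤ C log x for some absolute constant C, where φ is Euler's totient function. -/

import Mathlib

open Finset

private lemma sum_inv_sq_Icc2' : ∀ n : ℕ, 2 ≤ n → ∑ k ∈ Icc 2 n, (1:ℝ)/(k:ℝ)^2 ≤ 3/4 - 1/n := by
  intro n hn
  induction n, hn using Nat.le_induction with
  | base => norm_num
  | succ n hn ih =>
    rw [Finset.sum_Icc_succ_top (by omega)]
    have h1 : (1:ℝ)/((n+1:ℕ):ℝ)^2 ≤ 1/n - 1/(n+1) := by
      have hn0 : (0:ℝ) < n := by positivity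
      rw [div_sub_div _ _ (by positivity) (by positivity)]
      rw [div_le_div_iff₀ (by positivity) (by positivity)]
      push_cast
      ring_nf
      nlinarith
    push_cast at *
    linarith

private lemma sum_inv_sq_Icc2 (n : ℕ) : ∑ k ∈ Icc 2 n, (1:ℝ)/(k:ℝ)^2 ≤ 3/4 := by
  rcases lt_or_ge n 2 with h | h
  · rw [Finset.Icc_eq_empty (by omega)]; norm_num
  · have : (0:ℝ) ≤ 1/n := by positivity
    linarith [sum_inv_sq_Icc2' n h]

private lemma sum_inv_sq_Icc1 (n : ℕ) : ∑ k ∈ Icc 1 n, (1:ℝ)/(k:ℝ)^2 ≤ 2 := by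
  rcases Nat.eq_zero_or_pos n with h | h
  · subst h; simp
  · rw [← Finset.sum_Ioc_add_eq_sum_Icc (by omega : 1 ≤ n)]
    have : Ioc 1 n = Icc 2 n := by ext; simp; omega
    rw [this]
    have := sum_inv_sq_Icc2 n
    norm_num at *
    linarith

private lemma weier (S : Finset ℕ) (f : ℕ → ℝ) (h0 : ∀ p ∈ S, 0 ≤ f p) (h1 : ∀ p ∈ S, f p ≤ 1) :
    1 - ∑ p ∈ S, f p ≤ ∏ p ∈ S, (1 - f p) := by
  induction S using Finset.cons_induction with
  | empty => simp
  | cons a s ha ih =>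
    rw [Finset.sum_cons, Finset.prod_cons]
    have hs0 : ∀ p ∈ s, 0 ≤ f p := fun p hp => h0 p (Finset.mem_cons_of_mem hp)
    have hs1 : ∀ p ∈ s, f p ≤ 1 := fun p hp => h1 p (Finset.mem_cons_of_mem hp)
    have ih' := ih hs0 hs1
    have ha0 : 0 ≤ f a := h0 a (Finset.mem_cons_self a s)
    have ha1 : f a ≤ 1 := h1 a (Finset.mem_cons_self a s)
    have hsum : 0 ≤ ∑ p ∈ s, f p := Finset.sum_nonneg hs0
    nlinarith

private lemma prod_lb (n : ℕ) (hn : n ≠ 0) :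
    (1:ℝ)/4 ≤ ∏ p ∈ n.primeFactors, (1 - 1/(p:ℝ)^2) := by
  have hsub : n.primeFactors ⊆ Icc 2 n := by
    intro p hp
    have h1 := (Nat.mem_primeFactors.mp hp).1.two_le
    have h2 := Nat.le_of_dvd (Nat.pos_of_ne_zero hn) (Nat.mem_primeFactors.mp hp).2.1
    simp [h1, h2]
  have hsum : ∑ p ∈ n.primeFactors, (1:ℝ)/(p:ℝ)^2 ≤ 3/4 :=
    le_trans (Finset.sum_le_sum_of_subset_of_nonneg hsub (by intros; positivity)) (sum_inv_sq_Icc2 n)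
  have hw := weier n.primeFactors (fun p => (1:ℝ)/(p:ℝ)^2)
    (by intros; positivity)
    (by intro p hp
        have h1 := (Nat.mem_primeFactors.mp hp).1.two_le
        have : (1:ℝ) ≤ (p:ℝ)^2 := by
          have : (2:ℝ) ≤ p := by exact_mod_cast h1
          nlinarith
        rw [div_le_one (by positivity)] at *
        linarith)
  calc (1:ℝ)/4 ≤ 1 - ∑ p ∈ n.primeFactors, (1:ℝ)/(p:ℝ)^2 := by linarith
    _ ≤ _ := hw

private lemma prod_ub (d : ℕ) (hd : d ≠ 0) :
    ∏ p ∈ d.primeFactors, (1 + 1/(p:ℝ)) ≤ ∑ e ∈ d.divisors, 1/(e:ℝ) := by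
  have hprime : ∀ p ∈ d.primeFactors, p.Prime := fun p hp => (Nat.mem_primeFactors.mp hp).1
  have h1 : ∏ p ∈ d.primeFactors, (1/(p:ℝ) + 1) =
      ∑ t ∈ d.primeFactors.powerset, ∏ p ∈ t, (1/(p:ℝ)) := by
    rw [Finset.prod_add]
    refine Finset.sum_congr rfl fun t ht => ?_
    simp
  have h2 : ∀ t ∈ d.primeFactors.powerset, ∏ p ∈ t, (1/(p:ℝ)) = 1/((∏ p ∈ t, p : ℕ):ℝ) := by
    intro t ht
    push_cast
    rw [one_div, ← Finset.prod_inv_distrib]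
    simp_rw [one_div]
  have hinj : Set.InjOn (fun t : Finset ℕ => ∏ p ∈ t, p) d.primeFactors.powerset := by
    intro t1 h1' t2 h2' he
    have p1 : ∀ p ∈ t1, p.Prime := fun p hp => hprime p (Finset.mem_powerset.mp h1' hp)
    have p2 : ∀ p ∈ t2, p.Prime := fun p hp => hprime p (Finset.mem_powerset.mp h2' hp)
    simp only at he
    rw [← Nat.primeFactors_prod p1, ← Nat.primeFactors_prod p2, he]
  have himg : Finset.image (fun t : Finset ℕ => ∏ p ∈ t, p) d.primeFactors.powerset ⊆ d.divisors := by
    intro e he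
    rw [Finset.mem_image] at he
    obtain ⟨t, ht, rfl⟩ := he
    rw [Nat.mem_divisors]
    exact ⟨(Finset.prod_dvd_prod_of_subset t d.primeFactors _ (Finset.mem_powerset.mp ht)).trans
      (Nat.prod_primeFactors_dvd d), hd⟩
  calc ∏ p ∈ d.primeFactors, (1 + 1/(p:ℝ))
      = ∑ t ∈ d.primeFactors.powerset, 1/((∏ p ∈ t, p : ℕ):ℝ) := by
        simp_rw [add_comm (1:ℝ)]; rw [h1]; exact Finset.sum_congr rfl h2
    _ = ∑ e ∈ Finset.image (fun t : Finset ℕ => ∏ p ∈ t, p) d.primeFactors.powerset, 1/(e:ℝ) := by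
        rw [Finset.sum_image (fun t ht s hs => hinj ht hs)]
    _ ≤ ∑ e ∈ d.divisors, 1/(e:ℝ) :=
        Finset.sum_le_sum_of_subset_of_nonneg himg (by intros; positivity)

private lemma pointwise (d : ℕ) (hd : d ≠ 0) :
    (1:ℝ) / (Nat.totient d) ≤ 4 * ((1/(d:ℝ)) * ∑ e ∈ d.divisors, 1/(e:ℝ)) := by
  set P1 : ℝ := ∏ p ∈ d.primeFactors, (1 - 1/(p:ℝ)) with hP1def
  set P2 : ℝ := ∏ p ∈ d.primeFactors, (1 + 1/(p:ℝ)) with hP2def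
  set S : ℝ := ∑ e ∈ d.divisors, 1/(e:ℝ) with hSdef
  have hfac : ∀ p ∈ d.primeFactors, (2:ℝ) ≤ (p:ℝ) := by
    intro p hp
    exact_mod_cast (Nat.mem_primeFactors.mp hp).1.two_le
  have hP1pos : 0 < P1 := Finset.prod_pos (by
    intro p hp
    have := hfac p hp
    have : (1:ℝ)/p ≤ 1/2 := by
      apply div_le_div_of_nonneg_left <;> linarith
    linarith)
  have hP2pos : 0 < P2 := Finset.prod_pos (by
    intro p hp; have := hfac p hp; positivity)
  have hprod : P1 * P2 = ∏ p ∈ d.primeFactors, (1 - 1/(p:ℝ)^2) := by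
    rw [hP1def, hP2def, ← Finset.prod_mul_distrib]
    refine Finset.prod_congr rfl fun p hp => ?_
    have := hfac p hp
    field_simp
    ring
  have h14 : (1:ℝ)/4 ≤ P1 * P2 := hprod ▸ prod_lb d hd
  have hS : P2 ≤ S := prod_ub d hd
  have hphi : (Nat.totient d : ℝ) = d * P1 := by
    have := Nat.totient_eq_mul_prod_factors d
    have h2 := congrArg (fun q : ℚ => (q : ℝ)) this
    push_cast at h2
    rw [h2, hP1def]
    simp_rw [one_div]
  have hd0 : (0:ℝ) < d := by exact_mod_cast Nat.pos_of_ne_zero hd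
  have key : 1 ≤ 4 * S * P1 := by nlinarith
  rw [hphi]
  calc (1:ℝ)/((d:ℝ)*P1) ≤ (4*S*P1)/((d:ℝ)*P1) := by gcongr
    _ = 4 * ((1/(d:ℝ)) * S) := by field_simp

private lemma swap_sum (n : ℕ) :
    ∑ d ∈ Icc 1 n, (1/(d:ℝ)) * ∑ e ∈ d.divisors, 1/(e:ℝ) ≤
      (∑ a ∈ Icc 1 n, 1/(a:ℝ)^2) * (∑ b ∈ Icc 1 n, 1/(b:ℝ)) := by
  have stepA : ∀ d ∈ Icc 1 n, (1/(d:ℝ)) * ∑ e ∈ d.divisors, 1/(e:ℝ) =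
      ∑ p ∈ d.divisorsAntidiagonal, 1/((p.1:ℝ)^2 * p.2) := by
    intro d hd
    rw [mem_Icc] at hd
    have hd0 : d ≠ 0 := by omega
    rw [Nat.sum_divisorsAntidiagonal (f := fun a b => 1/((a:ℝ)^2 * b))]
    rw [Finset.mul_sum]
    refine Finset.sum_congr rfl fun e he => ?_
    rw [Nat.mem_divisors] at he
    have hdvd := he.1
    have he0 : e ≠ 0 := by rintro rfl; exact hd0 (Nat.eq_zero_of_zero_dvd hdvd)
    have hcast : ((e:ℝ))^2 * ((d/e : ℕ):ℝ) = (e:ℝ) * (d:ℝ) := by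
      have : (e * (d / e) : ℕ) = d := Nat.mul_div_cancel' hdvd
      have h2 : ((e * (d/e) : ℕ):ℝ) = (d:ℝ) := by rw [this]
      push_cast at h2
      nlinarith [h2]
    rw [hcast]
    have he0' : (0:ℝ) < e := by exact_mod_cast Nat.pos_of_ne_zero he0
    have hd0' : (0:ℝ) < d := by exact_mod_cast Nat.pos_of_ne_zero hd0
    field_simp
  rw [Finset.sum_congr rfl stepA]
  have hdisj : (↑(Icc 1 n) : Set ℕ).PairwiseDisjoint (fun d => d.divisorsAntidiagonal) := by
    intro d1 _ d2 _ hne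
    rw [Function.onFun, Finset.disjoint_left]
    intro p hp1 hp2
    rw [Nat.mem_divisorsAntidiagonal] at hp1 hp2
    exact hne (hp1.1.symm.trans hp2.1)
  rw [← Finset.sum_biUnion hdisj]
  have hsub : (Icc 1 n).biUnion (fun d => d.divisorsAntidiagonal) ⊆ Icc 1 n ×ˢ Icc 1 n := by
    intro p hp
    rw [Finset.mem_biUnion] at hp
    obtain ⟨d, hd, hp⟩ := hp
    rw [mem_Icc] at hd
    rw [Nat.mem_divisorsAntidiagonal] at hp
    rw [Finset.mem_product, mem_Icc, mem_Icc]
    have h1 : p.1 ≠ 0 := by rintro h; apply hp.2; rw [← hp.1, h, zero_mul]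
    have h2 : p.2 ≠ 0 := by rintro h; apply hp.2; rw [← hp.1, h, mul_zero]
    have hle1 : p.1 ≤ d := by rw [← hp.1]; exact Nat.le_mul_of_pos_right _ (Nat.pos_of_ne_zero h2)
    have hle2 : p.2 ≤ d := by rw [← hp.1]; exact Nat.le_mul_of_pos_left _ (Nat.pos_of_ne_zero h1)
    omega
  calc ∑ p ∈ (Icc 1 n).biUnion (fun d => d.divisorsAntidiagonal), 1/((p.1:ℝ)^2 * p.2)
      ≤ ∑ p ∈ Icc 1 n ×ˢ Icc 1 n, 1/((p.1:ℝ)^2 * p.2) :=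
        Finset.sum_le_sum_of_subset_of_nonneg hsub (by intros; positivity)
    _ = (∑ a ∈ Icc 1 n, 1/(a:ℝ)^2) * (∑ b ∈ Icc 1 n, 1/(b:ℝ)) := by
        rw [Finset.sum_mul_sum]
        rw [Finset.sum_product]
        refine Finset.sum_congr rfl fun a _ => Finset.sum_congr rfl fun b _ => ?_
        rw [div_mul_eq_div_div, one_div, one_div, div_eq_mul_inv]

theorem stmt_19 :
    ∃ C : ℝ, 0 < C ∧ ∀ x : ℝ, 2 ≤ x →
      ∑ d ∈ Finset.Icc 1 ⌊x⌋₊, (1 : ℝ) / Nat.totient d ≤ C * Real.log x := by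
  refine ⟨24, by norm_num, fun x hx => ?_⟩
  set n := ⌊x⌋₊ with hn
  have hlog2 : (1:ℝ)/2 ≤ Real.log x := by
    have h2 : Real.log 2 ≤ Real.log x := Real.log_le_log (by norm_num) hx
    have := Real.log_two_gt_d9
    linarith
  have hH : ∑ b ∈ Icc 1 n, 1/(b:ℝ) ≤ 1 + Real.log x := by
    have h1 := harmonic_floor_le_one_add_log x (by linarith)
    rw [harmonic_eq_sum_Icc] at h1
    have h2 : ((∑ i ∈ Icc 1 ⌊x⌋₊, (i:ℚ)⁻¹ : ℚ) : ℝ) = ∑ b ∈ Icc 1 n, 1/(b:ℝ) := by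
      push_cast
      simp_rw [one_div]
      rfl
    rw [h2] at h1
    exact h1
  have hHpos : 0 ≤ ∑ b ∈ Icc 1 n, 1/(b:ℝ) := Finset.sum_nonneg (by intros; positivity)
  calc ∑ d ∈ Icc 1 n, (1:ℝ) / Nat.totient d
      ≤ ∑ d ∈ Icc 1 n, 4 * ((1/(d:ℝ)) * ∑ e ∈ d.divisors, 1/(e:ℝ)) := by
        refine Finset.sum_le_sum fun d hd => ?_
        rw [mem_Icc] at hd
        exact pointwise d (by omega)
    _ = 4 * ∑ d ∈ Icc 1 n, (1/(d:ℝ)) * ∑ e ∈ d.divisors, 1/(e:ℝ) := by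
        rw [Finset.mul_sum]
    _ ≤ 4 * ((∑ a ∈ Icc 1 n, 1/(a:ℝ)^2) * (∑ b ∈ Icc 1 n, 1/(b:ℝ))) := by
        have := swap_sum n
        linarith
    _ ≤ 4 * (2 * (∑ b ∈ Icc 1 n, 1/(b:ℝ))) := by
        have := sum_inv_sq_Icc1 n
        nlinarith
    _ ≤ 4 * (2 * (1 + Real.log x)) := by nlinarith
    _ ≤ 24 * Real.log x := by nlinarith
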